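/- For n ≥ 2, r > 0, and θ ∈ ℝ, the condition |L_p(re^{iθ})| = 1/r holds if and only if f_n(r, θ) = 0; similarly |L_p(re^{iθ})| > 1/r iff f_n(r, θ) < 0, and |L_p(re^{iθ})| < 1/r iff f_n(r, θ) > 0. -/

import Mathlib

/-!
Put `z = r e^{iθ}` and `w = √(z^n)`. Then `‖w‖ = r^{n/2}`, and since the principal root has
nonnegative real part, `Re w = r^{n/2} |cos (nθ/2)|`. Writing
`L_p(z) = z (1 + (n-1) w) / (w (w + n - 1))` and expanding `‖1 + (n-1) w‖²` and `‖w + n - 1‖²` gives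
`r⁴ f_n(r, θ) = ‖w‖² ‖w + n - 1‖² (1 - (r ‖L_p(z)‖)²)`,
so `f_n(r, θ)` has the sign of `1 - r ‖L_p(z)‖`.
-/

open Complex Real Filter

/-- Laguerre iteration function for `p_n(z) = z^n - 1`, using the principal square root. -/
noncomputable def Lp (n : ℕ) (z : ℂ) : ℂ :=
  z * (((z ^ n) ^ ((1 : ℂ) / 2))⁻¹ + ((n : ℂ) - 1)) / ((z ^ n) ^ ((1 : ℂ) / 2) + ((n : ℂ) - 1))
/-- The characteristic function `f_n(r, θ)`. -/
noncomputable def fchar (n : ℕ) (r θ : ℝ) : ℝ :=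
  r ^ (2 * (n : ℝ) - 4)
    + 2 * ((n : ℝ) - 1) * |Real.cos ((n : ℝ) * θ / 2)| * r ^ ((n : ℝ) / 2) * (r ^ ((n : ℝ) - 4) - 1)
    - ((n : ℝ) - 1) ^ 2 * r ^ (n : ℝ)
    + ((n : ℝ) - 1) ^ 2 * r ^ ((n : ℝ) - 4) - 1

namespace Complex

lemma norm_mul_inv_add_div_add (z w m : ℂ) (hw : w ≠ 0) :
    ‖z * (w⁻¹ + m) / (w + m)‖ = ‖z‖ * ‖1 + m * w‖ / (‖w‖ * ‖w + m‖) := by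
  rw [show w⁻¹ + m = (1 + m * w) / w by field_simp, mul_div_assoc', norm_div, norm_div,
    norm_mul, div_div]

lemma sq_norm_add_ofReal (w : ℂ) (m : ℝ) : ‖w + m‖ ^ 2 = ‖w‖ ^ 2 + 2 * m * w.re + m ^ 2 := by
  simp only [Complex.sq_norm, normSq_apply, add_re, add_im, ofReal_re, ofReal_im]
  ring

lemma sq_norm_one_add_ofReal_mul (w : ℂ) (m : ℝ) :
    ‖1 + m * w‖ ^ 2 = 1 + 2 * m * w.re + m ^ 2 * ‖w‖ ^ 2 := by
  simp only [Complex.sq_norm, normSq_apply, add_re, add_im, mul_re, mul_im, one_re, one_im,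
    ofReal_re, ofReal_im]
  ring

lemma ofReal_mul_exp_mul_I_pow (ρ φ : ℝ) (n : ℕ) :
    ((ρ : ℂ) * exp (φ * I)) ^ n = ((ρ ^ n : ℝ) : ℂ) * exp ((n * φ : ℝ) * I) := by
  rw [mul_pow, ← exp_nat_mul]
  push_cast
  ring_nf

lemma norm_ofReal_mul_exp_mul_I_cpow_inv_two {ρ : ℝ} (hρ : 0 ≤ ρ) (φ : ℝ) :
    ‖((ρ : ℂ) * exp (φ * I)) ^ (2⁻¹ : ℂ)‖ = √ρ := by
  have := norm_cpow_inv_nat ((ρ : ℂ) * exp (φ * I)) 2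
  push_cast at this
  rw [this, norm_mul, norm_exp_ofReal_mul_I, mul_one, norm_real, Real.norm_of_nonneg hρ,
    Real.sqrt_eq_rpow, one_div]

lemma re_ofReal_mul_exp_mul_I_cpow_inv_two {ρ : ℝ} (hρ : 0 ≤ ρ) (φ : ℝ) :
    (((ρ : ℂ) * exp (φ * I)) ^ (2⁻¹ : ℂ)).re = √ρ * |Real.cos (φ / 2)| := by
  rw [cpow_inv_two_re, norm_mul, norm_exp_ofReal_mul_I, mul_one, norm_real,
    Real.norm_of_nonneg hρ, re_ofReal_mul, exp_ofReal_mul_I_re, ← Real.sqrt_sq_eq_abs,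
    ← Real.sqrt_mul hρ, Real.cos_sq, mul_div_cancel₀ _ two_ne_zero]
  congr 1
  ring

end Complex

lemma fchar_eq_div_pow_four (n : ℕ) {r : ℝ} (hr : 0 < r) (θ : ℝ) :
    fchar n r θ = (r ^ n * (r ^ n + 2 * (n - 1) * (√(r ^ n) * |Real.cos (n * θ / 2)|) + (n - 1) ^ 2)
      - r ^ 4 * (1 + 2 * (n - 1) * (√(r ^ n) * |Real.cos (n * θ / 2)|) + (n - 1) ^ 2 * r ^ n))
      / r ^ 4 := by
  have hsqrt : r ^ ((n : ℝ) / 2) = √(r ^ n) := by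
    rw [Real.sqrt_eq_rpow, ← Real.rpow_natCast, ← Real.rpow_mul hr.le]
    ring_nf
  have hsub (a : ℝ) : r ^ (a - 4) = r ^ a / r ^ 4 := by
    rw [Real.rpow_sub hr, show (4 : ℝ) = (4 : ℕ) by norm_num, Real.rpow_natCast]
  unfold fchar
  rw [hsub, hsub, hsqrt, Real.rpow_natCast, show 2 * (n : ℝ) = (2 * n : ℕ) by push_cast; ring,
    Real.rpow_natCast, pow_mul']
  field_simp
  ring

lemma exists_pos_fchar_eq_mul_one_sub_sq {n : ℕ} (hn : 1 ≤ n) {r : ℝ} (hr : 0 < r) (θ : ℝ) :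
    ∃ K > 0, fchar n r θ = K * (1 - (r * ‖Lp n (r * exp (θ * I))‖) ^ 2) := by
  set M : ℝ := n - 1
  set z := (r : ℂ) * exp (θ * I)
  set w := (z ^ n) ^ (2⁻¹ : ℂ)
  have hz : ‖z‖ = r := by
    rw [norm_mul, norm_exp_ofReal_mul_I, mul_one, norm_real, Real.norm_of_nonneg hr.le]
  have hw_norm : ‖w‖ = √(r ^ n) := by
    simp only [w, z]
    rw [ofReal_mul_exp_mul_I_pow, norm_ofReal_mul_exp_mul_I_cpow_inv_two (by positivity)]
  have hw_re : w.re = √(r ^ n) * |Real.cos (n * θ / 2)| := by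
    simp only [w, z]
    rw [ofReal_mul_exp_mul_I_pow, re_ofReal_mul_exp_mul_I_cpow_inv_two (by positivity)]
  have hw : 0 < ‖w‖ := by rw [hw_norm]; positivity
  have hM : 0 ≤ M := by simp only [M]; linarith [show (1 : ℝ) ≤ n by exact_mod_cast hn]
  have hwM : 0 < ‖w + M‖ := by
    have : ‖w‖ ^ 2 ≤ ‖w + M‖ ^ 2 := by
      rw [sq_norm_add_ofReal, hw_re]
      have : 0 ≤ M * (√(r ^ n) * |Real.cos (n * θ / 2)|) := by positivity
      nlinarith
    nlinarith [norm_nonneg (w + M)]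
  have hLp : ‖Lp n z‖ = r * ‖1 + M * w‖ / (‖w‖ * ‖w + M‖) := by
    rw [Lp, one_div, show (n : ℂ) - 1 = M by push_cast [M]; ring,
      norm_mul_inv_add_div_add _ _ _ (norm_pos_iff.mp hw), hz]
  refine ⟨‖w‖ ^ 2 * ‖w + M‖ ^ 2 / r ^ 4, by positivity, ?_⟩
  rw [hLp, fchar_eq_div_pow_four n hr θ]
  simp only [mul_pow, div_pow]
  rw [sq_norm_one_add_ofReal_mul, sq_norm_add_ofReal, hw_re, hw_norm, Real.sq_sqrt (by positivity)]
  field_simp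
  ring

lemma cmp_one_div_iff_sign_of_eq_mul_one_sub_sq {K r X f : ℝ} (hK : 0 < K) (hr : 0 < r)
    (hX : 0 ≤ X) (hf : f = K * (1 - (r * X) ^ 2)) :
    (X = 1 / r ↔ f = 0) ∧ (1 / r < X ↔ f < 0) ∧ (X < 1 / r ↔ 0 < f) := by
  have hrX : 0 ≤ r * X := by positivity
  have hgt : 1 / r < X ↔ f < 0 := by
    rw [div_lt_iff₀' hr, hf, ← neg_pos, ← mul_neg, mul_pos_iff_of_pos_left hK, neg_pos, sub_neg,
      one_lt_sq_iff₀ hrX]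
  have hlt : X < 1 / r ↔ 0 < f := by
    rw [lt_div_iff₀' hr, hf, mul_pos_iff_of_pos_left hK, sub_pos, sq_lt_one_iff₀ hrX]
  refine ⟨?_, hgt, hlt⟩
  rw [le_antisymm_iff, ← not_lt, ← not_lt, hgt, hlt, not_lt, not_lt, and_comm, ← le_antisymm_iff]

theorem stmt11 (n : ℕ) (hn : 2 ≤ n) (r θ : ℝ) (hr : 0 < r) :
    (‖Lp n ((r : ℂ) * Complex.exp (θ * Complex.I))‖ = 1 / r ↔ fchar n r θ = 0) ∧
    (1 / r < ‖Lp n ((r : ℂ) * Complex.exp (θ * Complex.I))‖ ↔ fchar n r θ < 0) ∧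
    (‖Lp n ((r : ℂ) * Complex.exp (θ * Complex.I))‖ < 1 / r ↔ 0 < fchar n r θ) := by
  obtain ⟨K, hK, hf⟩ := exists_pos_fchar_eq_mul_one_sub_sq (one_le_two.trans hn) hr θ
  exact cmp_one_div_iff_sign_of_eq_mul_one_sub_sq hK hr (norm_nonneg _) hf
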